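/- arXiv:2206.00779 — 5 statements merged into one kernel-verified Lean document; each statement's English description precedes it below -/
import Mathlib

section
/- Let N = 2^t with t ≥ 1 and let 0 ≤ θ < 2π. Let v_k = exp(i(θ + 2πk/N)) for k = 0,…,N−1 and let V_N = [v_k^l]_{k,l=0}^{N−1}. Then V_N = P_N^T · diag(V_{N/2}, V_{N/2}) · diag(I_{N/2}, Ḋ_{N/2}) · [[I_{N/2}, I_{N/2}],[I_{N/2}, −I_{N/2}]] · diag(I_{N/2}, c·I_{N/2}), where V_{N/2} = [v_{2k}^l]_{k,l=0}^{N/2−1} is the (N/2)×(N/2) Vandermonde matrix on the even nodes, Ḋ_{N/2} = diag(exp(2πil/N))_{l=0}^{N/2−1}, c = exp(iθN/2), I_{N/2} is the (N/2)×(N/2) identity matrix, and P_N is the even–odd permutation matrix. -/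
/-!
Writing `N = m + m`, the nodes are a geometric progression `v k = u * ω ^ k` with
`u = exp (i θ)` and `ω = exp (2 π i / N)`, so that `ω ^ m = -1`. Hence the node `v (2a+1)` is
`v (2a) * ω`, which turns row `2a + 1` of `V_N` into row `2a` times `diag (ω ^ l)`, and
`v k ^ (m + l) = (-1) ^ k * u ^ m * v k ^ l`. With the rows listed evens first and the columns
split at `m`, `V_N` therefore becomes the block matrix `[[W, c W], [W D, -(c W D)]]` with
`W = V_{N/2}` and `c = u ^ m`, which is the product of the four block factors.
-/

open Matrix Complex

/-- The even–odd permutation matrix `P_N` of size `N = m + m`: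
`(P x)_k = x_{2k}` for `0 ≤ k < m` and `(P x)_{m+k} = x_{2k+1}` for `0 ≤ k < m`. -/
noncomputable def evenOddPerm (m : ℕ) : Matrix (Fin (m + m)) (Fin (m + m)) ℂ :=
  Matrix.of fun i j =>
    if (j : ℕ) = (if (i : ℕ) < m then 2 * (i : ℕ) else 2 * ((i : ℕ) - m) + 1) then 1 else 0

def evenOddEquiv (m : ℕ) : Fin m ⊕ Fin m ≃ Fin (m + m) where
  toFun := Sum.elim (fun a => ⟨2 * a, by omega⟩) (fun a => ⟨2 * a + 1, by omega⟩)
  invFun k := if (k : ℕ) % 2 = 0 then .inl ⟨k / 2, by omega⟩ else .inr ⟨k / 2, by omega⟩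
  left_inv := by rintro (a | a) <;> simp [Fin.ext_iff]; omega
  right_inv k := by
    by_cases h : (k : ℕ) % 2 = 0 <;> simp [h, Fin.ext_iff] <;> omega

@[simp]
theorem evenOddEquiv_inl {m : ℕ} (a : Fin m) : (evenOddEquiv m (.inl a) : ℕ) = 2 * a := rfl

@[simp]
theorem evenOddEquiv_inr {m : ℕ} (a : Fin m) : (evenOddEquiv m (.inr a) : ℕ) = 2 * a + 1 := rfl

theorem evenOddPerm_eq_toMatrix (m : ℕ) :
    evenOddPerm m = (finSumFinEquiv.symm.trans (evenOddEquiv m)).toPEquiv.toMatrix := by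
  ext i j
  obtain ⟨a | a, rfl⟩ := finSumFinEquiv.surjective i <;>
    simp only [PEquiv.toMatrix_toPEquiv_apply, Equiv.trans_apply, Equiv.symm_apply_apply] <;>
    simp [evenOddPerm, Pi.single_apply, Fin.ext_iff]

theorem evenOddPerm_transpose_mul_submatrix {m : ℕ} {n o : Type*}
    (B : Matrix (Fin m ⊕ Fin m) n ℂ) (f : o → n) :
    (evenOddPerm m)ᵀ * B.submatrix finSumFinEquiv.symm f =
      B.submatrix (evenOddEquiv m).symm f := by
  rw [evenOddPerm_eq_toMatrix, ← PEquiv.toMatrix_symm, ← Equiv.toPEquiv_symm,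
    PEquiv.toMatrix_toPEquiv_mul]
  ext i j
  simp

section CommRing

variable {R : Type*} [CommRing R]

theorem fromBlocks_butterfly {n : Type*} [Fintype n] [DecidableEq n]
    (W D : Matrix n n R) (c : R) :
    fromBlocks W 0 0 W * fromBlocks 1 0 0 D * fromBlocks 1 1 1 (-1) * fromBlocks 1 0 0 (c • 1) =
      fromBlocks W (c • W) (W * D) (-(c • (W * D))) := by
  simp [fromBlocks_multiply]

theorem mul_pow_pow_add_of_pow_eq_neg_one {u ω : R} {m : ℕ} (hω : ω ^ m = -1) (k l : ℕ) :
    (u * ω ^ k) ^ (m + l) = (-1) ^ k * u ^ m * (u * ω ^ k) ^ l := by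
  rw [pow_add, mul_pow u, ← pow_mul, mul_comm k, pow_mul, hω]
  ring

theorem vandermonde_geom_submatrix_evenOddEquiv {u ω : R} {m : ℕ} (hω : ω ^ m = -1) :
    (vandermonde fun k : Fin (m + m) => u * ω ^ (k : ℕ)).submatrix (evenOddEquiv m)
        finSumFinEquiv =
      fromBlocks (vandermonde fun k : Fin m => u * ω ^ (2 * (k : ℕ)))
        (u ^ m • vandermonde fun k : Fin m => u * ω ^ (2 * (k : ℕ)))
        ((vandermonde fun k : Fin m => u * ω ^ (2 * (k : ℕ))) *
          diagonal fun l : Fin m => ω ^ (l : ℕ))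
        (-(u ^ m • ((vandermonde fun k : Fin m => u * ω ^ (2 * (k : ℕ))) *
          diagonal fun l : Fin m => ω ^ (l : ℕ)))) := by
  ext (a | a) (b | b)
  · rfl
  · simp only [submatrix_apply, finSumFinEquiv_apply_right, fromBlocks_apply₁₂,
      Matrix.smul_apply, vandermonde_apply, evenOddEquiv_inl, Fin.val_natAdd,
      mul_pow_pow_add_of_pow_eq_neg_one hω]
    simp [pow_mul]
  · simp [pow_succ, mul_pow, mul_assoc]
  · simp only [submatrix_apply, finSumFinEquiv_apply_right, fromBlocks_apply₂₂,
      Matrix.neg_apply, Matrix.smul_apply, vandermonde_apply, evenOddEquiv_inr, Fin.val_natAdd,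
      mul_pow_pow_add_of_pow_eq_neg_one hω]
    simp [pow_succ, pow_mul, mul_pow, mul_assoc]

end CommRing

theorem vandermonde_geom_radix2_factorization {u ω : ℂ} {m : ℕ} (hω : ω ^ m = -1) :
    vandermonde (fun k : Fin (m + m) => u * ω ^ (k : ℕ)) =
      (evenOddPerm m)ᵀ *
      reindex finSumFinEquiv finSumFinEquiv
        (fromBlocks (vandermonde fun k : Fin m => u * ω ^ (2 * (k : ℕ))) 0 0
          (vandermonde fun k : Fin m => u * ω ^ (2 * (k : ℕ)))) *
      reindex finSumFinEquiv finSumFinEquiv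
        (fromBlocks 1 0 0 (diagonal fun l : Fin m => ω ^ (l : ℕ))) *
      reindex finSumFinEquiv finSumFinEquiv (fromBlocks 1 1 1 (-1)) *
      reindex finSumFinEquiv finSumFinEquiv (fromBlocks 1 0 0 (u ^ m • 1)) := by
  simp only [reindex_apply, submatrix_mul_equiv, fromBlocks_butterfly,
    evenOddPerm_transpose_mul_submatrix, ← vandermonde_geom_submatrix_evenOddEquiv hω,
    submatrix_submatrix, Equiv.self_comp_symm, submatrix_id_id]

theorem exp_two_pi_mul_I_div_add_self_pow {m : ℕ} (hm : m ≠ 0) :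
    exp (2 * Real.pi * I / (m + m)) ^ m = -1 := by
  rw [← exp_nat_mul, ← exp_pi_mul_I]
  congr 1
  field_simp
  ring

theorem vandermonde_radix2_factorization_ccw_general
    (m : ℕ)
    (θ : ℝ)
    (v : ℕ → ℂ)
    (hv : ∀ k : ℕ, v k =
      Complex.exp (Complex.I * ((θ : ℂ) + 2 * (Real.pi : ℂ) * (k : ℂ) / ((m : ℂ) + (m : ℂ))))) :
    (Matrix.of fun k l : Fin (m + m) => v (k : ℕ) ^ (l : ℕ)) =
      (evenOddPerm m)ᵀ *
      (Matrix.reindex finSumFinEquiv finSumFinEquiv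
        (Matrix.fromBlocks
          (Matrix.of fun k l : Fin m => v (2 * (k : ℕ)) ^ (l : ℕ)) 0 0
          (Matrix.of fun k l : Fin m => v (2 * (k : ℕ)) ^ (l : ℕ)))) *
      (Matrix.reindex finSumFinEquiv finSumFinEquiv
        (Matrix.fromBlocks (1 : Matrix (Fin m) (Fin m) ℂ) 0 0
          (Matrix.diagonal fun l : Fin m =>
            Complex.exp (2 * (Real.pi : ℂ) * Complex.I * ((l : ℕ) : ℂ) / ((m : ℂ) + (m : ℂ)))))) *
      (Matrix.reindex finSumFinEquiv finSumFinEquiv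
        (Matrix.fromBlocks (1 : Matrix (Fin m) (Fin m) ℂ) 1 1 (-1))) *
      (Matrix.reindex finSumFinEquiv finSumFinEquiv
        (Matrix.fromBlocks (1 : Matrix (Fin m) (Fin m) ℂ) 0 0
          (Complex.exp (Complex.I * (θ : ℂ) * (m : ℂ)) • (1 : Matrix (Fin m) (Fin m) ℂ)))) := by
  rcases eq_or_ne m 0 with rfl | hm
  · ext k; exact k.elim0
  set u := exp (I * θ)
  set ω := exp (2 * Real.pi * I / (m + m))
  have hv_geom : v = fun k => u * ω ^ k := funext fun k => by
    rw [hv, ← exp_nat_mul, ← exp_add]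
    congr 1
    ring
  have hD : (fun l : Fin m => exp (2 * Real.pi * I * (l : ℕ) / (m + m))) =
      fun l : Fin m => ω ^ (l : ℕ) := funext fun l => by
    rw [← exp_nat_mul]
    congr 1
    ring
  have hc : exp (I * θ * m) = u ^ m := by
    rw [← exp_nat_mul]
    congr 1
    ring
  subst hv_geom
  rw [hD, hc]
  exact vandermonde_geom_radix2_factorization (exp_two_pi_mul_I_div_add_self_pow hm)

/-- Theorem 1 (radix-2 factorization of the Vandermonde matrix on equally spaced
counterclockwise nodes on the unit circle), with `N = 2 ^ t = m + m`. -/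
theorem vandermonde_radix2_factorization_ccw
    (t : ℕ) (ht : 1 ≤ t) (m : ℕ) (hm : m = 2 ^ (t - 1))
    (θ : ℝ) (hθ0 : 0 ≤ θ) (hθ1 : θ < 2 * Real.pi)
    (v : ℕ → ℂ)
    (hv : ∀ k : ℕ, v k =
      Complex.exp (Complex.I * ((θ : ℂ) + 2 * (Real.pi : ℂ) * (k : ℂ) / ((m : ℂ) + (m : ℂ))))) :
    (Matrix.of fun k l : Fin (m + m) => v (k : ℕ) ^ (l : ℕ)) =
      (evenOddPerm m)ᵀ *
      (Matrix.reindex finSumFinEquiv finSumFinEquiv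
        (Matrix.fromBlocks
          (Matrix.of fun k l : Fin m => v (2 * (k : ℕ)) ^ (l : ℕ)) 0 0
          (Matrix.of fun k l : Fin m => v (2 * (k : ℕ)) ^ (l : ℕ)))) *
      (Matrix.reindex finSumFinEquiv finSumFinEquiv
        (Matrix.fromBlocks (1 : Matrix (Fin m) (Fin m) ℂ) 0 0
          (Matrix.diagonal fun l : Fin m =>
            Complex.exp (2 * (Real.pi : ℂ) * Complex.I * ((l : ℕ) : ℂ) / ((m : ℂ) + (m : ℂ)))))) *
      (Matrix.reindex finSumFinEquiv finSumFinEquiv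
        (Matrix.fromBlocks (1 : Matrix (Fin m) (Fin m) ℂ) 1 1 (-1))) *
      (Matrix.reindex finSumFinEquiv finSumFinEquiv
        (Matrix.fromBlocks (1 : Matrix (Fin m) (Fin m) ℂ) 0 0
          (Complex.exp (Complex.I * (θ : ℂ) * (m : ℂ)) • (1 : Matrix (Fin m) (Fin m) ℂ)))) :=
  vandermonde_radix2_factorization_ccw_general m θ v hv
end

section
/- Let N = 2^t with t ≥ 1, 0 ≤ θ < 2π, v_k = exp(i(θ + 2πk/N)) for k = 0,…,N−1, and V_N = [v_k^l]_{k,l=0}^{N−1}. Then P_N · V_N equals the 2×2 block matrix [[V_{N/2}, D_{N/2}·V_{N/2}],[V_{N/2}·Ḋ_{N/2}, −D_{N/2}·V_{N/2}·Ḋ_{N/2}]], where V_{N/2} = [v_{2k}^l]_{k,l=0}^{N/2−1}, D_{N/2} = diag(v_{2k}^{N/2})_{k=0}^{N/2−1}, Ḋ_{N/2} = diag(exp(2πil/N))_{l=0}^{N/2−1}, and P_N is the even–odd permutation matrix. -/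
/-!
Row `k` of `P_N V_N` is row `2k` of `V_N` and row `N/2 + k` is row `2k + 1`. Consecutive nodes
differ by the factor `ω = exp(2πi/N)`, so `v_{2k+1}^l = v_{2k}^l ω^l`; since `ω^{N/2} = -1`, also
`v_{2k+1}^{N/2+l} = -v_{2k}^{N/2} v_{2k}^l ω^l`. These are the entries of the four blocks.
-/

open Matrix Complex

section evenOddPerm

variable {n : Type*} {m : ℕ} (A : Matrix (Fin (m + m)) n ℂ)

theorem evenOddPerm_mul_apply {i c : Fin (m + m)}
    (hc : (c : ℕ) = if (i : ℕ) < m then 2 * (i : ℕ) else 2 * ((i : ℕ) - m) + 1) (j : n) :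
    (evenOddPerm m * A) i j = A c j := by
  simp only [mul_apply, evenOddPerm, of_apply, ← hc, Fin.val_inj, ite_mul, one_mul, zero_mul,
    Finset.sum_ite_eq', Finset.mem_univ, if_true]

theorem evenOddPerm_mul_apply_castAdd (k : Fin m) (j : n) :
    (evenOddPerm m * A) (Fin.castAdd m k) j = A ⟨2 * k, by omega⟩ j :=
  evenOddPerm_mul_apply A (by simp) j

theorem evenOddPerm_mul_apply_natAdd (k : Fin m) (j : n) :
    (evenOddPerm m * A) (Fin.natAdd m k) j = A ⟨2 * k + 1, by omega⟩ j :=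
  evenOddPerm_mul_apply A (by simp) j

end evenOddPerm

section geometric

variable {R : Type*} {v : ℕ → R} {ω : R}

theorem geom_succ_pow [CommMonoid R] (hv : ∀ k, v (k + 1) = v k * ω) (k l : ℕ) :
    v (k + 1) ^ l = v k ^ l * ω ^ l := by
  rw [hv, mul_pow]

theorem geom_succ_pow_add_of_pow_eq_neg_one [CommRing R] (hv : ∀ k, v (k + 1) = v k * ω)
    {m : ℕ} (hω : ω ^ m = -1) (k l : ℕ) : v (k + 1) ^ (m + l) = -(v k ^ m * v k ^ l * ω ^ l) := by
  rw [geom_succ_pow hv, pow_add, pow_add, hω]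
  ring

end geometric

theorem exp_two_pi_I_mul_div_eq_pow (l : ℕ) (z : ℂ) :
    exp (2 * (Real.pi : ℂ) * I * l / z) = exp (2 * (Real.pi : ℂ) * I / z) ^ l := by
  rw [← exp_nat_mul]
  ring_nf

theorem exp_two_pi_I_div_add_self_pow_self {m : ℕ} (hm : m ≠ 0) :
    exp (2 * (Real.pi : ℂ) * I / (m + m)) ^ m = -1 := by
  have hm' : (m : ℂ) ≠ 0 := Nat.cast_ne_zero.mpr hm
  rw [← exp_nat_mul, ← exp_pi_mul_I]
  congr 1
  field_simp
  ring

theorem evenOddPerm_mul_vandermonde_eq_blocks_general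
    (m : ℕ)
    (θ : ℝ)
    (v : ℕ → ℂ)
    (hv : ∀ k : ℕ, v k =
      Complex.exp (Complex.I * ((θ : ℂ) + 2 * (Real.pi : ℂ) * (k : ℂ) / ((m : ℂ) + (m : ℂ))))) :
    evenOddPerm m * (Matrix.of fun k l : Fin (m + m) => v (k : ℕ) ^ (l : ℕ)) =
      Matrix.reindex finSumFinEquiv finSumFinEquiv
        (Matrix.fromBlocks
          (Matrix.of fun k l : Fin m => v (2 * (k : ℕ)) ^ (l : ℕ))
          (Matrix.diagonal (fun k : Fin m => v (2 * (k : ℕ)) ^ m) *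
            (Matrix.of fun k l : Fin m => v (2 * (k : ℕ)) ^ (l : ℕ)))
          ((Matrix.of fun k l : Fin m => v (2 * (k : ℕ)) ^ (l : ℕ)) *
            Matrix.diagonal (fun l : Fin m =>
              Complex.exp (2 * (Real.pi : ℂ) * Complex.I * ((l : ℕ) : ℂ) / ((m : ℂ) + (m : ℂ)))))
          (-(Matrix.diagonal (fun k : Fin m => v (2 * (k : ℕ)) ^ m) *
            (Matrix.of fun k l : Fin m => v (2 * (k : ℕ)) ^ (l : ℕ)) *
            Matrix.diagonal (fun l : Fin m =>
              Complex.exp (2 * (Real.pi : ℂ) * Complex.I * ((l : ℕ) : ℂ) / ((m : ℂ) + (m : ℂ))))))) := by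
  have hstep : ∀ k, v (k + 1) = v k * exp (2 * (Real.pi : ℂ) * I / (m + m)) := by
    intro k
    rw [hv, hv, ← exp_add]
    congr 1
    push_cast
    ring
  ext i j
  induction i using Fin.addCases with
  | left a =>
    induction j using Fin.addCases <;>
      simp only [reindex_apply, submatrix_apply, finSumFinEquiv_symm_apply_castAdd,
        finSumFinEquiv_symm_apply_natAdd, evenOddPerm_mul_apply_castAdd, fromBlocks_apply₁₁,
        fromBlocks_apply₁₂, diagonal_mul, of_apply, Fin.val_castAdd, Fin.val_natAdd, pow_add]
  | right a =>
    have hω := exp_two_pi_I_div_add_self_pow_self a.pos.ne'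
    induction j using Fin.addCases with
    | left b =>
      simp only [reindex_apply, submatrix_apply, finSumFinEquiv_symm_apply_castAdd,
        finSumFinEquiv_symm_apply_natAdd, evenOddPerm_mul_apply_natAdd, fromBlocks_apply₂₁,
        mul_diagonal, of_apply, Fin.val_castAdd, exp_two_pi_I_mul_div_eq_pow,
        geom_succ_pow hstep]
    | right b =>
      simp only [reindex_apply, submatrix_apply, finSumFinEquiv_symm_apply_natAdd,
        evenOddPerm_mul_apply_natAdd, fromBlocks_apply₂₂, Fin.val_natAdd, of_apply,
        exp_two_pi_I_mul_div_eq_pow, geom_succ_pow_add_of_pow_eq_neg_one hstep hω]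
      rw [Matrix.neg_apply, mul_diagonal, diagonal_mul, of_apply]

/-- `P_N · V_N = [[V_{N/2}, D·V_{N/2}], [V_{N/2}·Ḋ, −D·V_{N/2}·Ḋ]]` for the
Vandermonde matrix on equally spaced counterclockwise unit-circle nodes,
with `N = 2 ^ t = m + m`, `D = diag(v_{2k}^{N/2})`, `Ḋ = diag(exp(2πil/N))`. -/
theorem evenOddPerm_mul_vandermonde_eq_blocks
    (t : ℕ) (ht : 1 ≤ t) (m : ℕ) (hm : m = 2 ^ (t - 1))
    (θ : ℝ) (hθ0 : 0 ≤ θ) (hθ1 : θ < 2 * Real.pi)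
    (v : ℕ → ℂ)
    (hv : ∀ k : ℕ, v k =
      Complex.exp (Complex.I * ((θ : ℂ) + 2 * (Real.pi : ℂ) * (k : ℂ) / ((m : ℂ) + (m : ℂ))))) :
    evenOddPerm m * (Matrix.of fun k l : Fin (m + m) => v (k : ℕ) ^ (l : ℕ)) =
      Matrix.reindex finSumFinEquiv finSumFinEquiv
        (Matrix.fromBlocks
          (Matrix.of fun k l : Fin m => v (2 * (k : ℕ)) ^ (l : ℕ))
          (Matrix.diagonal (fun k : Fin m => v (2 * (k : ℕ)) ^ m) *
            (Matrix.of fun k l : Fin m => v (2 * (k : ℕ)) ^ (l : ℕ)))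
          ((Matrix.of fun k l : Fin m => v (2 * (k : ℕ)) ^ (l : ℕ)) *
            Matrix.diagonal (fun l : Fin m =>
              Complex.exp (2 * (Real.pi : ℂ) * Complex.I * ((l : ℕ) : ℂ) / ((m : ℂ) + (m : ℂ)))))
          (-(Matrix.diagonal (fun k : Fin m => v (2 * (k : ℕ)) ^ m) *
            (Matrix.of fun k l : Fin m => v (2 * (k : ℕ)) ^ (l : ℕ)) *
            Matrix.diagonal (fun l : Fin m =>
              Complex.exp (2 * (Real.pi : ℂ) * Complex.I * ((l : ℕ) : ℂ) / ((m : ℂ) + (m : ℂ))))))) :=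
  evenOddPerm_mul_vandermonde_eq_blocks_general m θ v hv
end

section
/- Let N = 2^t with t ≥ 1, 0 ≤ θ < 2π, and v_k = exp(i(θ + 2πk/N)) for k = 0,…,N−1. Then [v_{2k+1}^{(N/2)+l}]_{k,l=0}^{N/2−1} = − diag(v_{2k}^{N/2})_{k=0}^{N/2−1} · [v_{2k}^l]_{k,l=0}^{N/2−1} · diag(exp(2πil/N))_{l=0}^{N/2−1}. -/
open Matrix Complex

/-- For equally spaced counterclockwise unit-circle nodes with `N = 2 ^ t = m + m`,
the matrix `[v_{2k+1}^{(N/2)+l}]` equals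
`− diag(v_{2k}^{N/2}) · [v_{2k}^l] · diag(exp(2πil/N))`. -/
theorem odd_node_shifted_matrix_eq_neg_diag_even_diag
    (t : ℕ) (ht : 1 ≤ t) (m : ℕ) (hm : m = 2 ^ (t - 1))
    (θ : ℝ) (hθ0 : 0 ≤ θ) (hθ1 : θ < 2 * Real.pi)
    (v : ℕ → ℂ)
    (hv : ∀ k : ℕ, v k =
      Complex.exp (Complex.I * ((θ : ℂ) + 2 * (Real.pi : ℂ) * (k : ℂ) / ((m : ℂ) + (m : ℂ))))) :
    (Matrix.of fun k l : Fin m => v (2 * (k : ℕ) + 1) ^ (m + (l : ℕ))) =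
      -(Matrix.diagonal (fun k : Fin m => v (2 * (k : ℕ)) ^ m) *
        (Matrix.of fun k l : Fin m => v (2 * (k : ℕ)) ^ (l : ℕ)) *
        Matrix.diagonal (fun l : Fin m =>
          Complex.exp (2 * (Real.pi : ℂ) * Complex.I * ((l : ℕ) : ℂ) / ((m : ℂ) + (m : ℂ))))) := by
  have hm0 : (m : ℂ) ≠ 0 := by
    have : m ≠ 0 := by simp [hm]
    exact_mod_cast this
  ext k l
  simp only [Matrix.neg_apply, Matrix.mul_diagonal, Matrix.diagonal_mul, Matrix.of_apply, hv]
  rw [← Complex.exp_nat_mul, ← Complex.exp_nat_mul, ← Complex.exp_nat_mul,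
    ← neg_one_mul, ← Complex.exp_pi_mul_I, ← Complex.exp_add, ← Complex.exp_add, ← Complex.exp_add]
  congr 1
  push_cast
  field_simp [hm0]
  ring
end

section
/- Let N = 2^t with t ≥ 1, 0 ≤ θ < 2π, v_k = exp(i(θ + 2πk/N)) for k = 0,…,N−1, and V_N = [v_k^l]_{k,l=0}^{N−1}. Then V_N = P_N^T · diag(V_{N/2}, V_{N/2}) · [[I_{N/2}, c·I_{N/2}],[Ḋ_{N/2}, −c·Ḋ_{N/2}]], where V_{N/2} = [v_{2k}^l]_{k,l=0}^{N/2−1}, Ḋ_{N/2} = diag(exp(2πil/N))_{l=0}^{N/2−1}, c = exp(iθN/2), and P_N is the even–odd permutation matrix. -/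
open Matrix Complex

theorem fromBlocks_diag_mul_butterfly {n R : Type*} [Fintype n] [DecidableEq n] [CommRing R]
    (A D : Matrix n n R) (c : R) :
    fromBlocks A 0 0 A * fromBlocks 1 (c • 1) D (-(c • D)) =
      fromBlocks A (c • A) (A * D) (-(c • (A * D))) := by
  simp [fromBlocks_multiply]

section EvenOddPerm

variable {m : ℕ}

theorem evenOddPerm_apply_of_even {k : Fin (m + m)} {a : Fin m} (hk : (k : ℕ) = 2 * a)
    (i : Fin (m + m)) : evenOddPerm m i k = if i = Fin.castAdd m a then 1 else 0 := by
  have := i.isLt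
  rw [evenOddPerm, of_apply]
  simp only [Fin.ext_iff, Fin.val_castAdd]
  split_ifs <;> first | rfl | omega

theorem evenOddPerm_apply_of_odd {k : Fin (m + m)} {a : Fin m} (hk : (k : ℕ) = 2 * a + 1)
    (i : Fin (m + m)) : evenOddPerm m i k = if i = Fin.natAdd m a then 1 else 0 := by
  have := a.isLt
  rw [evenOddPerm, of_apply]
  simp only [Fin.ext_iff, Fin.val_natAdd]
  split_ifs <;> first | rfl | omega

variable {n : Type*} (M : Matrix (Fin (m + m)) n ℂ) (l : n)

theorem evenOddPerm_transpose_mul_apply_of_even {k : Fin (m + m)} {a : Fin m}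
    (hk : (k : ℕ) = 2 * a) : ((evenOddPerm m)ᵀ * M) k l = M (Fin.castAdd m a) l := by
  simp [mul_apply, evenOddPerm_apply_of_even hk]

theorem evenOddPerm_transpose_mul_apply_of_odd {k : Fin (m + m)} {a : Fin m}
    (hk : (k : ℕ) = 2 * a + 1) : ((evenOddPerm m)ᵀ * M) k l = M (Fin.natAdd m a) l := by
  simp [mul_apply, evenOddPerm_apply_of_odd hk]

end EvenOddPerm

section Nodes

variable {R : Type*} [CommRing R] {m : ℕ} (z : R) {ω : R}

theorem even_node_pow_eq (hω : ω ^ m = -1) (a : ℕ) : (z * ω ^ (2 * a)) ^ m = z ^ m := by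
  rw [mul_pow, ← pow_mul, mul_comm (2 * a), pow_mul, hω, (even_two_mul a).neg_one_pow, mul_one]

theorem odd_node_pow_eq (ω : R) (a l : ℕ) :
    (z * ω ^ (2 * a + 1)) ^ l = (z * ω ^ (2 * a)) ^ l * ω ^ l := by
  ring

end Nodes

theorem vandermonde_geometric_nodes_radix2 {m : ℕ} (z ω : ℂ) (hω : ω ^ m = -1) :
    (of fun k l : Fin (m + m) => (z * ω ^ (k : ℕ)) ^ (l : ℕ)) =
      (evenOddPerm m)ᵀ *
      (reindex finSumFinEquiv finSumFinEquiv
        (fromBlocks (of fun k l : Fin m => (z * ω ^ (2 * (k : ℕ))) ^ (l : ℕ)) 0 0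
          (of fun k l : Fin m => (z * ω ^ (2 * (k : ℕ))) ^ (l : ℕ)))) *
      (reindex finSumFinEquiv finSumFinEquiv
        (fromBlocks 1 (z ^ m • 1) (diagonal fun l : Fin m => ω ^ (l : ℕ))
          (-(z ^ m • diagonal fun l : Fin m => ω ^ (l : ℕ))))) := by
  rw [Matrix.mul_assoc, reindex_apply, reindex_apply, submatrix_mul_equiv,
    fromBlocks_diag_mul_butterfly]
  ext k l
  obtain ⟨a, ha | ha⟩ : ∃ a : Fin m, (k : ℕ) = 2 * a ∨ (k : ℕ) = 2 * a + 1 :=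
    ⟨⟨k / 2, by omega⟩, by simp only; omega⟩
  · rw [evenOddPerm_transpose_mul_apply_of_even _ _ ha]
    induction l using Fin.addCases <;>
      simp only [submatrix_apply, of_apply, Fin.val_castAdd, Fin.val_natAdd, ha,
        finSumFinEquiv_symm_apply_castAdd, finSumFinEquiv_symm_apply_natAdd, fromBlocks_apply₁₁,
        fromBlocks_apply₁₂, Matrix.smul_apply, smul_eq_mul]
    rw [pow_add, even_node_pow_eq z hω]
  · rw [evenOddPerm_transpose_mul_apply_of_odd _ _ ha]
    induction l using Fin.addCases <;>
      simp only [submatrix_apply, of_apply, Fin.val_castAdd, Fin.val_natAdd, ha,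
        finSumFinEquiv_symm_apply_castAdd, finSumFinEquiv_symm_apply_natAdd, fromBlocks_apply₂₁,
        fromBlocks_apply₂₂, Matrix.neg_apply, Matrix.smul_apply, mul_diagonal, smul_eq_mul]
    case left l => exact odd_node_pow_eq z ω a l
    case right l =>
      rw [pow_add, odd_node_pow_eq z ω a m, odd_node_pow_eq z ω a l, even_node_pow_eq z hω, hω]
      ring

theorem vandermonde_radix2_two_factor_general
    (m : ℕ)
    (θ : ℝ)
    (v : ℕ → ℂ)
    (hv : ∀ k : ℕ, v k =
      Complex.exp (Complex.I * ((θ : ℂ) + 2 * (Real.pi : ℂ) * (k : ℂ) / ((m : ℂ) + (m : ℂ))))) :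
    (Matrix.of fun k l : Fin (m + m) => v (k : ℕ) ^ (l : ℕ)) =
      (evenOddPerm m)ᵀ *
      (Matrix.reindex finSumFinEquiv finSumFinEquiv
        (Matrix.fromBlocks
          (Matrix.of fun k l : Fin m => v (2 * (k : ℕ)) ^ (l : ℕ)) 0 0
          (Matrix.of fun k l : Fin m => v (2 * (k : ℕ)) ^ (l : ℕ)))) *
      (Matrix.reindex finSumFinEquiv finSumFinEquiv
        (Matrix.fromBlocks
          (1 : Matrix (Fin m) (Fin m) ℂ)
          (Complex.exp (Complex.I * (θ : ℂ) * (m : ℂ)) • (1 : Matrix (Fin m) (Fin m) ℂ))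
          (Matrix.diagonal (fun l : Fin m =>
            Complex.exp (2 * (Real.pi : ℂ) * Complex.I * ((l : ℕ) : ℂ) / ((m : ℂ) + (m : ℂ)))))
          (-(Complex.exp (Complex.I * (θ : ℂ) * (m : ℂ)) •
            Matrix.diagonal (fun l : Fin m =>
              Complex.exp (2 * (Real.pi : ℂ) * Complex.I * ((l : ℕ) : ℂ) / ((m : ℂ) + (m : ℂ)))))))) := by
  rcases Nat.eq_zero_or_pos m with rfl | hm
  · ext i; exact i.elim0
  have hm' : (m : ℂ) ≠ 0 := Nat.cast_ne_zero.mpr hm.ne'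
  set z := exp (I * θ)
  set ω := exp (2 * (Real.pi : ℂ) * I / ((m : ℂ) + m))
  have hv' : v = fun k ↦ z * ω ^ k := funext fun k ↦ by
    rw [hv, ← exp_nat_mul, ← exp_add]
    ring_nf
  have hω : ω ^ m = -1 := by
    rw [← exp_nat_mul, ← exp_pi_mul_I]
    congr 1
    field_simp
    ring
  have hc : exp (I * θ * m) = z ^ m := by rw [← exp_nat_mul]; ring_nf
  have hD : (fun l : Fin m ↦ exp (2 * (Real.pi : ℂ) * I * ((l : ℕ) : ℂ) / ((m : ℂ) + m))) =
      fun l : Fin m ↦ ω ^ (l : ℕ) := funext fun l ↦ by rw [← exp_nat_mul]; ring_nf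
  subst hv'
  rw [hc, hD]
  exact vandermonde_geometric_nodes_radix2 z ω hω

/-- Two-factor form of the radix-2 factorization: for the Vandermonde matrix on equally
spaced counterclockwise unit-circle nodes with `N = 2 ^ t = m + m`,
`V_N = P_Nᵀ · diag(V_{N/2}, V_{N/2}) · [[I, c·I], [Ḋ, −c·Ḋ]]` with
`Ḋ = diag(exp(2πil/N))` and `c = exp(iθN/2)`. -/
theorem vandermonde_radix2_two_factor
    (t : ℕ) (ht : 1 ≤ t) (m : ℕ) (hm : m = 2 ^ (t - 1))
    (θ : ℝ) (hθ0 : 0 ≤ θ) (hθ1 : θ < 2 * Real.pi)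
    (v : ℕ → ℂ)
    (hv : ∀ k : ℕ, v k =
      Complex.exp (Complex.I * ((θ : ℂ) + 2 * (Real.pi : ℂ) * (k : ℂ) / ((m : ℂ) + (m : ℂ))))) :
    (Matrix.of fun k l : Fin (m + m) => v (k : ℕ) ^ (l : ℕ)) =
      (evenOddPerm m)ᵀ *
      (Matrix.reindex finSumFinEquiv finSumFinEquiv
        (Matrix.fromBlocks
          (Matrix.of fun k l : Fin m => v (2 * (k : ℕ)) ^ (l : ℕ)) 0 0
          (Matrix.of fun k l : Fin m => v (2 * (k : ℕ)) ^ (l : ℕ)))) *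
      (Matrix.reindex finSumFinEquiv finSumFinEquiv
        (Matrix.fromBlocks
          (1 : Matrix (Fin m) (Fin m) ℂ)
          (Complex.exp (Complex.I * (θ : ℂ) * (m : ℂ)) • (1 : Matrix (Fin m) (Fin m) ℂ))
          (Matrix.diagonal (fun l : Fin m =>
            Complex.exp (2 * (Real.pi : ℂ) * Complex.I * ((l : ℕ) : ℂ) / ((m : ℂ) + (m : ℂ)))))
          (-(Complex.exp (Complex.I * (θ : ℂ) * (m : ℂ)) •
            Matrix.diagonal (fun l : Fin m =>
              Complex.exp (2 * (Real.pi : ℂ) * Complex.I * ((l : ℕ) : ℂ) / ((m : ℂ) + (m : ℂ)))))))) :=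
  vandermonde_radix2_two_factor_general m θ v hv
end

section
/- Let m : ℕ → ℕ satisfy the recurrence of the real multiplication (GDB) count of the radix-2 Vandermonde algorithm vancc applied to a real input vector: m(1) = 1 and m(t) = 2·m(t−1) + 2^{t+1} − 2 for all t ≥ 2. Then m(t) = 2·t·2^t − (5/2)·2^t + 2 for all t ≥ 1; that is, with N = 2^t, the real multiplication count #mℝ(VanCC, N) equals 2Nt − (5/2)N + 2. -/
/-- The real multiplication (GDB) count of the radix-2 Vandermonde algorithm `vancc`
applied to a real input vector: if `m 1 = 1` and `m t = 2·m (t−1) + 2^{t+1} − 2` for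
`t ≥ 2`, then `m t = 2·t·2^t − (5/2)·2^t + 2` for all `t ≥ 1`; i.e. with `N = 2^t`,
`#mℝ(VanCC, N) = 2Nt − (5/2)N + 2`. -/
theorem vancc_real_multiplication_count
    (m : ℕ → ℕ) (h1 : m 1 = 1)
    (hrec : ∀ t : ℕ, 2 ≤ t → (m t : ℚ) = 2 * m (t - 1) + 2 ^ (t + 1) - 2) :
    ∀ t : ℕ, 1 ≤ t → (m t : ℚ) = 2 * t * 2 ^ t - (5 / 2) * 2 ^ t + 2 := by
  intro t ht
  induction t with
  | zero => omega
  | succ n ih =>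
    rcases Nat.eq_or_lt_of_le ht with h | h
    · simp [← h, h1]; norm_num
    · have hn : 1 ≤ n := by omega
      have h2 : 2 ≤ n + 1 := by omega
      have := hrec (n + 1) h2
      simp only [Nat.add_sub_cancel] at this
      rw [this, ih hn]
      push_cast
      ring
end
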